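/- Let s, q ≥ 2 and let m ≥ 2 with m ≠ 3. In the graph F'_{s,q,m}, with x, v₁, a, b as in its construction and h₁, h₂ the two universal vertices of the copy of H_m, a two-element set D of vertices is a dominating set of F'_{s,q,m} if and only if D is one of {x, v₁}, {x, a}, {x, b}, {v₁, h₁}, {v₁, h₂}. -/

import Mathlib

/-- `D` is a dominating set of `G`: every vertex not in `D` has a neighbor in `D`. -/
def Dominating {V : Type*} (G : SimpleGraph V) (D : Set V) : Prop :=
  ∀ v, v ∉ D → ∃ d ∈ D, G.Adj d v

/-- The graph `H_m`, the join of `K₂` with the complement of `K_{m-2}`: the first two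
vertices are adjacent to everything, the remaining vertices form an independent set.
(`H₀` is the null graph, `H₂ = K₂`.) -/
def HGraph (m : ℕ) : SimpleGraph (Fin m) :=
  SimpleGraph.fromRel (fun u _ => u.val < 2)

/-- Vertex type of `F'_{s,q,m}`: the part `{a, b}` of `K_{2,s}` (`a = inl (inl 0)`,
`b = inl (inl 1)`), the `s`-part of `K_{2,s}`, the `q - 2` vertices `b₁, …, b_{q-2}`,
the vertex `v₁ = inr (inl ())`, the copy of `H_m`, and the vertex `x = inr (inr (inr ()))`. -/
abbrev F'Vert (s q m : ℕ) : Type :=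
  (Fin 2 ⊕ (Fin s ⊕ Fin (q - 2))) ⊕ (Unit ⊕ (Fin m ⊕ Unit))

/-- The graph `F'_{s,q,m}`. -/
def F'Graph (s q m : ℕ) : SimpleGraph (F'Vert s q m) :=
  SimpleGraph.fromRel (fun u v =>
    match u, v with
    | .inl (.inl _), .inl (.inr (.inl _)) => True        -- {a, b} to the s-part
    | .inr (.inl _), .inl _ => True                      -- v₁ to all of P
    | .inr (.inr (.inl h)), .inr (.inr (.inl _)) => h.val < 2  -- inside H_m
    | .inr (.inr (.inr _)), .inr (.inr (.inl _)) => True -- x to H_m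
    | .inr (.inr (.inr _)), .inl (.inl _) => True        -- x to {a, b}
    | .inr (.inr (.inr _)), .inl (.inr (.inr _)) => True -- x to the bᵢ's
    | _, _ => False)

/-! Call `a, b, v₁` the hubs. The only dominators of an `s`-part vertex `c` besides `c` itself are
the hubs, so a dominating pair without hubs contains two `s`-part vertices, is therefore equal to
that pair, and misses `x`. Dominating `h₀` forces the other element into `H_m ∪ {x}`. With `x`,
every hub works. With `h_j`, nothing on the `K_{2,s}` side is dominated by `h_j`, so the hub must be
`v₁` (`a` misses `b` and vice versa), and `h_j` must dominate all of `H_m`, which for `m ≠ 3`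
means `j` is one of its two universal vertices. -/

theorem Set.eq_pair_of_ncard_eq_two {α : Type*} {D : Set α} {a b : α} (hD : D.ncard = 2)
    (ha : a ∈ D) (hb : b ∈ D) (hab : a ≠ b) : D = {a, b} :=
  (Set.eq_of_subset_of_ncard_le (Set.pair_subset ha hb) (by rw [hD, Set.ncard_pair hab])
    (Set.finite_of_ncard_pos (by omega))).symm

section Domination

variable {V : Type*} (G : SimpleGraph V)

def Dominates (d v : V) : Prop := d = v ∨ G.Adj d v

variable {G}

theorem Dominating.exists_dominates {D : Set V} (hD : Dominating G D) (v : V) :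
    ∃ d ∈ D, Dominates G d v := by
  by_cases hv : v ∈ D
  · exact ⟨v, hv, Or.inl rfl⟩
  · obtain ⟨d, hd, hadj⟩ := hD v hv
    exact ⟨d, hd, Or.inr hadj⟩

theorem dominating_pair_iff {d₁ d₂ : V} :
    Dominating G {d₁, d₂} ↔ ∀ v, Dominates G d₁ v ∨ Dominates G d₂ v := by
  refine ⟨fun hD v => ?_, fun hD v hv => ?_⟩
  · obtain ⟨d, hd, hdv⟩ := hD.exists_dominates v
    rcases hd with rfl | rfl
    exacts [Or.inl hdv, Or.inr hdv]
  · simp only [Set.mem_insert_iff, Set.mem_singleton_iff, not_or] at hv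
    rcases hD v with (h | h) | (h | h)
    exacts [absurd h.symm hv.1, ⟨d₁, by simp, h⟩, absurd h.symm hv.2, ⟨d₂, by simp, h⟩]

end Domination

theorem HGraph_adj {m : ℕ} {i j : Fin m} :
    (HGraph m).Adj i j ↔ i ≠ j ∧ (i.val < 2 ∨ j.val < 2) :=
  SimpleGraph.fromRel_adj _ _ _

theorem HGraph_forall_dominates_iff {m : ℕ} (hm : m ≠ 3) {j : Fin m} :
    (∀ k, Dominates (HGraph m) j k) ↔ j.val < 2 := by
  refine ⟨fun h => ?_, fun hj k => ?_⟩
  · by_contra hj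
    let k : Fin m := ⟨if j.val = 2 then 3 else 2, by split_ifs <;> omega⟩
    have hk : ¬ Dominates (HGraph m) j k := by
      simp only [Dominates, HGraph_adj, Fin.ext_iff, k]
      split_ifs <;> omega
    exact hk (h k)
  · by_cases hjk : j = k
    · exact Or.inl hjk
    · exact Or.inr (HGraph_adj.2 ⟨hjk, Or.inl hj⟩)

namespace F'Graph

variable {s q m : ℕ}

local notation "𝐚" => Sum.inl (Sum.inl 0)
local notation "𝐛" => Sum.inl (Sum.inl 1)
local notation "𝐜" u:max => Sum.inl (Sum.inr (Sum.inl u))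
local notation "𝐯" => Sum.inr (Sum.inl ())
local notation "𝐡" j:max => Sum.inr (Sum.inr (Sum.inl j))
local notation "𝐱" => Sum.inr (Sum.inr (Sum.inr ()))

theorem adj_h_h {i j : Fin m} : (F'Graph s q m).Adj (𝐡 i) (𝐡 j) ↔ (HGraph m).Adj i j := by
  simp [F'Graph, HGraph_adj]

theorem dominates_h_h {i j : Fin m} :
    Dominates (F'Graph s q m) (𝐡 i) (𝐡 j) ↔ Dominates (HGraph m) i j := by
  simp only [Dominates, Sum.inr.injEq, Sum.inl.injEq, adj_h_h]

theorem eq_hub_of_adj_c {d : F'Vert s q m} {u : Fin s} (h : (F'Graph s q m).Adj d (𝐜 u)) :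
    d = 𝐚 ∨ d = 𝐛 ∨ d = 𝐯 := by
  rcases d with (i | _ | _) | _ | _ | _ <;> simp_all [F'Graph]
  omega

theorem eq_x_or_h_of_dominates_h {d : F'Vert s q m} {j : Fin m}
    (h : Dominates (F'Graph s q m) d (𝐡 j)) : d = 𝐱 ∨ ∃ i, d = 𝐡 i := by
  rcases d with (_ | _ | _) | _ | _ | _ <;> simp_all [Dominates, F'Graph]

theorem exists_hub_mem (hs : 2 ≤ s) {D : Set (F'Vert s q m)} (hD : D.ncard = 2)
    (hdom : Dominating (F'Graph s q m) D) : ∃ p ∈ D, p = 𝐚 ∨ p = 𝐛 ∨ p = 𝐯 := by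
  by_contra! hnone
  have hc (u : Fin s) : 𝐜 u ∈ D := by
    by_contra hu
    obtain ⟨d, hd, hadj⟩ := hdom _ hu
    rcases eq_hub_of_adj_c hadj with rfl | rfl | rfl
    exacts [(hnone _ hd).1 rfl, (hnone _ hd).2.1 rfl, (hnone _ hd).2.2 rfl]
  have hD01 : D = {𝐜 ⟨0, by omega⟩, 𝐜 ⟨1, by omega⟩} :=
    Set.eq_pair_of_ncard_eq_two hD (hc _) (hc _) (by simp)
  obtain ⟨d, hd, hdx⟩ := hdom.exists_dominates 𝐱
  rw [hD01] at hd
  rcases hd with rfl | rfl <;> simp [Dominates, F'Graph] at hdx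

theorem exists_x_or_h_mem (hm : 0 < m) {D : Set (F'Vert s q m)}
    (hdom : Dominating (F'Graph s q m) D) : ∃ z ∈ D, z = 𝐱 ∨ ∃ j, z = 𝐡 j := by
  obtain ⟨d, hd, hdh⟩ := hdom.exists_dominates (𝐡 ⟨0, hm⟩)
  exact ⟨d, hd, eq_x_or_h_of_dominates_h hdh⟩

theorem dominating_pair_x_hub {p : F'Vert s q m} (hp : p = 𝐚 ∨ p = 𝐛 ∨ p = 𝐯) :
    Dominating (F'Graph s q m) {𝐱, p} := by
  refine dominating_pair_iff.2 fun v => ?_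
  rcases hp with rfl | rfl | rfl <;>
    rcases v with (_ | _ | _) | _ | _ | _ <;> simp [Dominates, F'Graph]

theorem dominating_pair_hub_h_iff (hm : m ≠ 3) {p : F'Vert s q m} (hp : p = 𝐚 ∨ p = 𝐛 ∨ p = 𝐯)
    {j : Fin m} : Dominating (F'Graph s q m) {p, 𝐡 j} ↔ p = 𝐯 ∧ j.val < 2 := by
  rw [dominating_pair_iff, ← HGraph_forall_dominates_iff hm]
  constructor
  · intro hdom
    have hH (k : Fin m) : Dominates (HGraph m) j k := by
      rw [← dominates_h_h (s := s) (q := q)]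
      rcases hp with rfl | rfl | rfl <;> simpa [Dominates, F'Graph] using hdom (𝐡 k)
    rcases hp with rfl | rfl | rfl
    · simpa [Dominates, F'Graph] using hdom 𝐛
    · simpa [Dominates, F'Graph] using hdom 𝐚
    · exact ⟨rfl, hH⟩
  · rintro ⟨rfl, hj⟩ v
    rcases v with (_ | _ | _) | _ | k | _
    case inr.inr.inl => exact Or.inr (dominates_h_h.2 (hj k))
    all_goals simp [Dominates, F'Graph]

end F'Graph

open F'Graph in
theorem stmt18 (s q m : ℕ) (hs : 2 ≤ s) (hm : 2 ≤ m) (hm3 : m ≠ 3) :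
    ∀ D : Set (F'Vert s q m), D.ncard = 2 →
      (Dominating (F'Graph s q m) D ↔
        D = {Sum.inr (Sum.inr (Sum.inr ())), Sum.inr (Sum.inl ())} ∨
        D = {Sum.inr (Sum.inr (Sum.inr ())), Sum.inl (Sum.inl 0)} ∨
        D = {Sum.inr (Sum.inr (Sum.inr ())), Sum.inl (Sum.inl 1)} ∨
        D = {Sum.inr (Sum.inl ()), Sum.inr (Sum.inr (Sum.inl ⟨0, by omega⟩))} ∨
        D = {Sum.inr (Sum.inl ()), Sum.inr (Sum.inr (Sum.inl ⟨1, by omega⟩))}) := by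
  intro D hD
  constructor
  · intro hdom
    obtain ⟨p, hpD, hp⟩ := exists_hub_mem hs hD hdom
    obtain ⟨z, hzD, hz⟩ := exists_x_or_h_mem (by omega) hdom
    have hpz : p ≠ z := by
      rcases hp with rfl | rfl | rfl <;> rcases hz with rfl | ⟨j, rfl⟩ <;> simp
    obtain rfl := Set.eq_pair_of_ncard_eq_two hD hpD hzD hpz
    rcases hz with rfl | ⟨j, rfl⟩
    · rcases hp with rfl | rfl | rfl <;> simp [Set.pair_comm]
    · obtain ⟨rfl, hj⟩ := (dominating_pair_hub_h_iff hm3 hp).1 hdom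
      rcases j with ⟨_ | _ | j, _⟩
      exacts [.inr (.inr (.inr (.inl rfl))), .inr (.inr (.inr (.inr rfl))), absurd hj (by simp)]
  · rintro (rfl | rfl | rfl | rfl | rfl)
    iterate 3 exact dominating_pair_x_hub (by simp)
    all_goals exact (dominating_pair_hub_h_iff hm3 (by simp)).2 ⟨rfl, by simp⟩
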